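/- Suppose X is a compact metric space, φ : X → X is a homeomorphism such that φ^n is minimal for every n ≥ 1, and β : X → X is a finite order homeomorphism commuting with φ. Then φ ∘ β is minimal. -/
import Mathlib


def IsMinimalMap {X : Type*} [TopologicalSpace X] (f : X → X) : Prop :=
  ∀ F : Set X, IsClosed F → F.Nonempty → f '' F = F → F = Set.univ

theorem stmt_3 {X : Type*} [MetricSpace X] [CompactSpace X] (φ β : X ≃ₜ X)
    (hmin : ∀ n : ℕ, 1 ≤ n → IsMinimalMap ((⇑φ)^[n]))
    (K : ℕ) (hK : 1 ≤ K) (hβK : (⇑β)^[K] = id)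
    (hcomm : ⇑β ∘ ⇑φ = ⇑φ ∘ ⇑β) :
    IsMinimalMap (⇑φ ∘ ⇑β) := by
  intro F hF hne hinv
  have hc : Function.Commute (⇑φ) (⇑β) := by
    intro x
    exact (congrFun hcomm x).symm
  have hiter : (⇑φ ∘ ⇑β)^[K] = (⇑φ)^[K] := by
    rw [hc.comp_iterate, hβK, Function.comp_id]
  have hinvK : ∀ n : ℕ, (⇑φ ∘ ⇑β)^[n] '' F = F := by
    intro n
    induction n with
    | zero => simp
    | succ n ih =>
      rw [Function.iterate_succ', Set.image_comp, ih, hinv]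
  have := hinvK K
  rw [hiter] at this
  exact hmin K hK F hF hne this
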